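/- Saks–Henstock Lemma for compact lines: let K be a compact line, G : K → ℝ amenable, and f : K → ℝ G-integrable. For every ε > 0 and every ε-gauge δ for f, and for every δ-fine tagged system of intervals S = {([a_k,b_k], t_k) : k = 1,...,m} in K, one has |Σ_{k=1}^m ( f(t_k)(G(b_k) − G(a_k)) + f(a_k)G(a_k) − ∫_{a_k}^{b_k} f dG )| ≤ 2ε. -/

import Mathlib

open Set Filter MeasureTheory

/-- A tagged partition of the interval `[a,b]` in a linear order `K`. -/
structure TaggedPartition (K : Type*) [LinearOrder K] (a b : K) where
  n : ℕ
  x : ℕ → K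
  t : ℕ → K
  x_zero : x 0 = a
  x_last : x n = b
  mono : ∀ i < n, x i ≤ x (i + 1)
  tag_mem : ∀ i < n, t (i + 1) ∈ Set.Icc (x i) (x (i + 1))

/-- A gauge on the interval `[a,b]` of `K`: each point of `[a,b]` is assigned a
relatively open subinterval of `[a,b]` containing it. -/
def IsGauge (K : Type*) [LinearOrder K] [TopologicalSpace K] (a b : K) (δ : K → Set K) : Prop :=
  ∀ x ∈ Set.Icc a b, x ∈ δ x ∧ (δ x).OrdConnected ∧ ∃ U, IsOpen U ∧ δ x = U ∩ Set.Icc a b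

/-- A tagged partition is `δ`-fine when `(x_{i-1}, x_i] ⊆ δ(t_i)` for all `i`. -/
def TaggedPartition.IsFine {K : Type*} [LinearOrder K] {a b : K}
    (P : TaggedPartition K a b) (δ : K → Set K) : Prop :=
  ∀ i < P.n, Set.Ioc (P.x i) (P.x (i + 1)) ⊆ δ (P.t (i + 1))

/-- The Riemann sum `S(f,G,P) = f(a)G(a) + Σ f(t_i)(G(x_i) - G(x_{i-1}))`. -/
noncomputable def riemannSum {K : Type*} [LinearOrder K] {a b : K}
    (f G : K → ℝ) (P : TaggedPartition K a b) : ℝ :=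
  f a * G a + ∑ i ∈ Finset.range P.n, f (P.t (i + 1)) * (G (P.x (i + 1)) - G (P.x i))

/-- `f` has Kurzweil–Stieltjes integral `A` with respect to `G` over `[a,b]`. -/
def HasIntegral {K : Type*} [LinearOrder K] [TopologicalSpace K]
    (f G : K → ℝ) (a b : K) (A : ℝ) : Prop :=
  ∀ ε : ℝ, 0 < ε → ∃ δ : K → Set K, IsGauge K a b δ ∧
    ∀ P : TaggedPartition K a b, P.IsFine δ → |riemannSum f G P - A| < ε

/-- `G` is amenable: right-continuous everywhere, and regulated (left limits exist at
left-dense points, right limits at right-dense points). -/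
def Amenable {K : Type*} [LinearOrder K] [TopologicalSpace K] [BoundedOrder K]
    (G : K → ℝ) : Prop :=
  (∀ x : K, ContinuousWithinAt G (Set.Ici x) x) ∧
  (∀ x : K, x ≠ ⊥ → (¬ ∃ y, y ⋖ x) → ∃ l, Filter.Tendsto G (nhdsWithin x (Set.Iio x)) (nhds l)) ∧
  (∀ x : K, x ≠ ⊤ → (¬ ∃ y, x ⋖ y) → ∃ l, Filter.Tendsto G (nhdsWithin x (Set.Ioi x)) (nhds l))

open Classical in
/-- `L_G(x)`: `0` at the least element, `G` of the immediate predecessor if `x` is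
left-isolated, and the left limit of `G` at `x` if `x` is left-dense. -/
noncomputable def Lfun {K : Type*} [LinearOrder K] [TopologicalSpace K] [BoundedOrder K]
    (G : K → ℝ) (x : K) : ℝ :=
  if x = ⊥ then 0
  else if h : ∃ y, y ⋖ x then G h.choose
  else Function.leftLim G x

/-- The set of variation sums of `G` over divisions of `[a,b]`. -/
def varSums {K : Type*} [LinearOrder K] (G : K → ℝ) (a b : K) : Set ℝ :=
  {v | ∃ (n : ℕ) (x : ℕ → K), x 0 = a ∧ x n = b ∧ (∀ i < n, x i ≤ x (i + 1)) ∧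
        v = ∑ i ∈ Finset.range n, |G (x (i + 1)) - G (x i)|}

/-- `S` is null for the outer measure induced by `μ` via covers by countably many
open intervals. -/
def GNull {K : Type*} [LinearOrder K] [TopologicalSpace K] [MeasurableSpace K]
    (μ : MeasureTheory.Measure K) (S : Set K) : Prop :=
  ∀ ε : ℝ, 0 < ε → ∃ I : ℕ → Set K, (∀ n, IsOpen (I n) ∧ (I n).OrdConnected) ∧
    S ⊆ ⋃ n, I n ∧ ∑' n, μ (I n) < ENNReal.ofReal ε

/-!
Glue the given tagged intervals, together with δ-fine partitions of the gaps between them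
(Cousin's lemma), into a δ-fine partition of `K`; glue the same gaps with δ-fine partitions
`Q_k` of the `[a_k, b_k]` whose Riemann sums approximate `ι_k` within `η / (m + 1)` into a
second one. Both Riemann sums are within `ε` of `A`. When Riemann sums of adjacent partitions
are added, the term `f(c) G(c)` at the common endpoint `c` is counted twice; this is what the
terms `f(a_k) G(a_k)` account for, so the difference of the two Riemann sums is the sum in
question up to `η`, and `η` is arbitrary.
-/

namespace TaggedPartition

variable {K : Type*} [LinearOrder K]

def refl (a : K) : TaggedPartition K a a where
  n := 0
  x := fun _ => a
  t := fun _ => a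
  x_zero := rfl
  x_last := rfl
  mono := fun _ h => absurd h (Nat.not_lt_zero _)
  tag_mem := fun _ h => absurd h (Nat.not_lt_zero _)

theorem refl_isFine (a : K) (δ : K → Set K) : (refl a).IsFine δ :=
  fun _ h => absurd h (Nat.not_lt_zero _)

def single (a b tg : K) (hat : a ≤ tg) (htb : tg ≤ b) : TaggedPartition K a b where
  n := 1
  x := fun i => if i = 0 then a else b
  t := fun _ => tg
  x_zero := rfl
  x_last := rfl
  mono := fun _ h => by simpa [Nat.lt_one_iff.mp h] using hat.trans htb
  tag_mem := fun _ h => by simpa [Nat.lt_one_iff.mp h] using And.intro hat htb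

theorem single_isFine {a b tg : K} {hat : a ≤ tg} {htb : tg ≤ b} {δ : K → Set K}
    (h : Ioc a b ⊆ δ tg) : (single a b tg hat htb).IsFine δ := by
  intro i hi
  obtain rfl := Nat.lt_one_iff.mp hi
  exact h

section trans

variable {a b c : K} (P : TaggedPartition K a b) (Q : TaggedPartition K b c)

def transX (i : ℕ) : K := if i < P.n then P.x i else Q.x (i - P.n)

def transT (i : ℕ) : K := if i ≤ P.n then P.t i else Q.t (i - P.n)

theorem transX_of_le {i : ℕ} (h : i ≤ P.n) : transX P Q i = P.x i := by
  rcases h.lt_or_eq with h | rfl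
  · exact if_pos h
  · simp [transX, P.x_last, Q.x_zero]

theorem transX_transT_of_lt {i : ℕ} (h : i < P.n) :
    transX P Q i = P.x i ∧ transX P Q (i + 1) = P.x (i + 1) ∧
      transT P Q (i + 1) = P.t (i + 1) :=
  ⟨transX_of_le P Q h.le, transX_of_le P Q h, if_pos h⟩

theorem transX_transT_add (j : ℕ) :
    transX P Q (P.n + j) = Q.x j ∧ transX P Q (P.n + j + 1) = Q.x (j + 1) ∧
      transT P Q (P.n + j + 1) = Q.t (j + 1) := by
  simp [transX, transT, Nat.add_assoc]

def trans : TaggedPartition K a c where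
  n := P.n + Q.n
  x := transX P Q
  t := transT P Q
  x_zero := (transX_of_le P Q (Nat.zero_le _)).trans P.x_zero
  x_last := by simp [transX, Q.x_last]
  mono i hi := by
    rcases lt_or_ge i P.n with h | h
    · obtain ⟨h₀, h₁, -⟩ := transX_transT_of_lt P Q h
      rw [h₀, h₁]
      exact P.mono i h
    · obtain ⟨j, rfl⟩ := Nat.exists_eq_add_of_le h
      obtain ⟨h₀, h₁, -⟩ := transX_transT_add P Q j
      rw [h₀, h₁]
      exact Q.mono j (by omega)
  tag_mem i hi := by
    rcases lt_or_ge i P.n with h | h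
    · obtain ⟨h₀, h₁, h₂⟩ := transX_transT_of_lt P Q h
      rw [h₀, h₁, h₂]
      exact P.tag_mem i h
    · obtain ⟨j, rfl⟩ := Nat.exists_eq_add_of_le h
      obtain ⟨h₀, h₁, h₂⟩ := transX_transT_add P Q j
      rw [h₀, h₁, h₂]
      exact Q.tag_mem j (by omega)

variable {P Q}

theorem IsFine.trans {δ : K → Set K} (hP : P.IsFine δ) (hQ : Q.IsFine δ) :
    (P.trans Q).IsFine δ := by
  intro i hi
  rcases lt_or_ge i P.n with h | h
  · obtain ⟨h₀, h₁, h₂⟩ := transX_transT_of_lt P Q h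
    show Ioc (transX P Q i) (transX P Q (i + 1)) ⊆ δ (transT P Q (i + 1))
    rw [h₀, h₁, h₂]
    exact hP i h
  · obtain ⟨j, rfl⟩ := Nat.exists_eq_add_of_le h
    obtain ⟨h₀, h₁, h₂⟩ := transX_transT_add P Q j
    show Ioc (transX P Q (P.n + j)) (transX P Q (P.n + j + 1)) ⊆ δ (transT P Q (P.n + j + 1))
    rw [h₀, h₁, h₂]
    exact hQ j (by change P.n + j < P.n + Q.n at hi; omega)

end trans

theorem IsFine.mono {a b : K} {P : TaggedPartition K a b} {δ δ' : K → Set K}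
    (hP : P.IsFine δ) (h : ∀ x, δ x ⊆ δ' x) : P.IsFine δ' :=
  fun i hi => (hP i hi).trans (h _)

theorem exists_isFine_snoc {a y c tg : K} {δ : K → Set K} {P : TaggedPartition K a y}
    (hP : P.IsFine δ) (hyt : y ≤ tg) (htc : tg ≤ c) (h : Ioc y c ⊆ δ tg) :
    ∃ Q : TaggedPartition K a c, Q.IsFine δ :=
  ⟨P.trans (single y c tg hyt htc), hP.trans (single_isFine h)⟩

end TaggedPartition

open TaggedPartition

section RiemannSum

variable {K : Type*} [LinearOrder K] (f G : K → ℝ)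

theorem riemannSum_single {a b tg : K} (hat : a ≤ tg) (htb : tg ≤ b) :
    riemannSum f G (single a b tg hat htb) = f a * G a + f tg * (G b - G a) := by
  simp [riemannSum, single]

theorem riemannSum_trans {a b c : K} (P : TaggedPartition K a b) (Q : TaggedPartition K b c) :
    riemannSum f G (P.trans Q) = riemannSum f G P + riemannSum f G Q - f b * G b := by
  have hleft : ∀ i ∈ Finset.range P.n,
      f (transT P Q (i + 1)) * (G (transX P Q (i + 1)) - G (transX P Q i))
        = f (P.t (i + 1)) * (G (P.x (i + 1)) - G (P.x i)) := fun i hi => by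
    obtain ⟨h₀, h₁, h₂⟩ := transX_transT_of_lt P Q (Finset.mem_range.mp hi)
    rw [h₀, h₁, h₂]
  have hright : ∀ j ∈ Finset.range Q.n,
      f (transT P Q (P.n + j + 1)) * (G (transX P Q (P.n + j + 1)) - G (transX P Q (P.n + j)))
        = f (Q.t (j + 1)) * (G (Q.x (j + 1)) - G (Q.x j)) := fun j _ => by
    obtain ⟨h₀, h₁, h₂⟩ := transX_transT_add P Q j
    rw [h₀, h₁, h₂]
  simp only [riemannSum, TaggedPartition.trans, Finset.sum_range_add, Finset.sum_congr rfl hleft,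
    Finset.sum_congr rfl hright]
  ring

end RiemannSum

section Gauge

variable {K : Type*} [LinearOrder K] [TopologicalSpace K] {a b : K} {δ : K → Set K}

theorem IsGauge.restrict (hδ : IsGauge K a b δ) {u v : K} (hau : a ≤ u) (hvb : v ≤ b) :
    IsGauge K u v fun x => δ x ∩ Icc u v := by
  intro x hx
  obtain ⟨hxδ, hconn, U, hU, hδx⟩ := hδ x ⟨hau.trans hx.1, hx.2.trans hvb⟩
  refine ⟨⟨hxδ, hx⟩, hconn.inter ordConnected_Icc, U, hU, ?_⟩
  show δ x ∩ Icc u v = _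
  rw [hδx, inter_assoc, inter_eq_right.mpr (Icc_subset_Icc hau hvb)]

theorem IsGauge.inter {δ' : K → Set K} (hδ : IsGauge K a b δ) (hδ' : IsGauge K a b δ') :
    IsGauge K a b fun x => δ x ∩ δ' x := by
  intro x hx
  obtain ⟨hxδ, hconn, U, hU, hδx⟩ := hδ x hx
  obtain ⟨hxδ', hconn', U', hU', hδ'x⟩ := hδ' x hx
  refine ⟨⟨hxδ, hxδ'⟩, hconn.inter hconn', U ∩ U', hU.inter hU', ?_⟩
  show δ x ∩ δ' x = _
  rw [hδx, hδ'x, ← inter_inter_distrib_right]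

variable [OrderTopology K]

theorem IsGauge.exists_Ioc_subset_of_lt (hδ : IsGauge K a b δ) {x : K} (hx : x ∈ Icc a b)
    (hax : a < x) : ∃ l, a ≤ l ∧ l < x ∧ Ioc l x ⊆ δ x := by
  obtain ⟨hxδ, -, U, hU, hδx⟩ := hδ x hx
  obtain ⟨l, ⟨hal, hlx⟩, hl⟩ :=
    exists_Ioc_subset_of_mem_nhds' (hU.mem_nhds (hδx ▸ hxδ).1) hax
  refine ⟨l, hal, hlx, fun z hz => ?_⟩
  rw [hδx]
  exact ⟨hl hz, hal.trans hz.1.le, hz.2.trans hx.2⟩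

/-- The second alternative is the case of an immediate successor `d` of `x`, where
`Ioc x d = {d}`. -/
theorem IsGauge.exists_Ioc_subset_of_gt (hδ : IsGauge K a b δ) {x : K} (hx : x ∈ Icc a b)
    (hxb : x < b) : ∃ d, x < d ∧ d ≤ b ∧ (Ioc x d ⊆ δ x ∨ Ioc x d ⊆ δ d) := by
  obtain ⟨hxδ, -, U, hU, hδx⟩ := hδ x hx
  obtain ⟨u, ⟨hxu, hub⟩, hu⟩ :=
    exists_Ico_subset_of_mem_nhds' (hU.mem_nhds (hδx ▸ hxδ).1) hxb
  by_cases hgap : (Ioo x u).Nonempty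
  · obtain ⟨z, hxz, hzu⟩ := hgap
    refine ⟨z, hxz, hzu.le.trans hub, Or.inl fun w hw => ?_⟩
    rw [hδx]
    exact ⟨hu ⟨hw.1.le, hw.2.trans_lt hzu⟩, hx.1.trans hw.1.le,
      hw.2.trans (hzu.le.trans hub)⟩
  · refine ⟨u, hxu, hub, Or.inr fun w hw => ?_⟩
    obtain rfl : w = u := hw.2.eq_or_lt.resolve_right fun hwu => hgap ⟨w, hw.1, hwu⟩
    exact (hδ w ⟨hx.1.trans hw.1.le, hub⟩).1

variable [CompactSpace K]

theorem IsGauge.exists_isFine (hδ : IsGauge K a b δ) (hab : a ≤ b) :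
    ∃ P : TaggedPartition K a b, P.IsFine δ := by
  set S : Set K := {x | x ∈ Icc a b ∧ ∃ P : TaggedPartition K a x, P.IsFine δ}
  have haS : a ∈ S := ⟨⟨le_rfl, hab⟩, refl a, refl_isFine a δ⟩
  obtain ⟨c, -, hc⟩ := isClosed_closure.isCompact.exists_isLUB ⟨a, subset_closure haS⟩
  replace hc : IsLUB S c := by rwa [IsLUB, upperBounds_closure] at hc
  have hcI : c ∈ Icc a b := ⟨hc.1 haS, hc.2 fun x hx => hx.1.2⟩
  have hcS : c ∈ S := by
    rcases hcI.1.eq_or_lt with rfl | hac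
    · exact haS
    obtain ⟨l, -, hlc, hl⟩ := hδ.exists_Ioc_subset_of_lt hcI hac
    obtain ⟨y, ⟨-, P, hP⟩, hly, hyc⟩ := hc.exists_between hlc
    exact ⟨hcI, exists_isFine_snoc hP hyc le_rfl ((Ioc_subset_Ioc_left hly.le).trans hl)⟩
  obtain ⟨-, P, hP⟩ := hcS
  rcases hcI.2.eq_or_lt with rfl | hcb
  · exact ⟨P, hP⟩
  obtain ⟨d, hcd, hdb, hd⟩ := hδ.exists_Ioc_subset_of_gt hcI hcb
  have hdS : d ∈ S := ⟨⟨hcI.1.trans hcd.le, hdb⟩,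
    hd.elim (exists_isFine_snoc hP le_rfl hcd.le) (exists_isFine_snoc hP hcd.le le_rfl)⟩
  exact absurd (hc.1 hdS) hcd.not_ge

theorem IsGauge.exists_isFine_of_le (hδ : IsGauge K a b δ) {u v : K} (hau : a ≤ u)
    (hvb : v ≤ b) (huv : u ≤ v) : ∃ P : TaggedPartition K u v, P.IsFine δ := by
  obtain ⟨P, hP⟩ := (hδ.restrict hau hvb).exists_isFine huv
  exact ⟨P, hP.mono fun _ => inter_subset_left⟩

theorem HasIntegral.exists_isFine_abs_sub_lt {f G : K → ℝ} {u v : K} {I η : ℝ}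
    (hI : HasIntegral f G u v I) (hδ : IsGauge K a b δ) (hau : a ≤ u) (hvb : v ≤ b)
    (huv : u ≤ v) (hη : 0 < η) :
    ∃ P : TaggedPartition K u v, P.IsFine δ ∧ |riemannSum f G P - I| < η := by
  obtain ⟨δ', hδ', hI'⟩ := hI η hη
  obtain ⟨P, hP⟩ := ((hδ.restrict hau hvb).inter hδ').exists_isFine huv
  exact ⟨P, hP.mono fun _ => inter_subset_left.trans inter_subset_left,
    hI' P (hP.mono fun _ => inter_subset_right)⟩

end Gauge

section RiemannDiff

variable {K : Type*} [LinearOrder K] {f G : K → ℝ} {δ : K → Set K}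

def IsFineRiemannDiff (f G : K → ℝ) (δ : K → Set K) (u v : K) (d : ℝ) : Prop :=
  ∃ P Q : TaggedPartition K u v, P.IsFine δ ∧ Q.IsFine δ ∧
    riemannSum f G P - riemannSum f G Q = d

theorem isFineRiemannDiff_zero {u v : K} {P : TaggedPartition K u v} (hP : P.IsFine δ) :
    IsFineRiemannDiff f G δ u v 0 :=
  ⟨P, P, hP, hP, sub_self _⟩

theorem IsFineRiemannDiff.trans {u v w : K} {d₁ d₂ : ℝ}
    (h₁ : IsFineRiemannDiff f G δ u v d₁) (h₂ : IsFineRiemannDiff f G δ v w d₂) :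
    IsFineRiemannDiff f G δ u w (d₁ + d₂) := by
  obtain ⟨P₁, Q₁, hP₁, hQ₁, rfl⟩ := h₁
  obtain ⟨P₂, Q₂, hP₂, hQ₂, rfl⟩ := h₂
  refine ⟨P₁.trans P₂, Q₁.trans Q₂, hP₁.trans hP₂, hQ₁.trans hQ₂, ?_⟩
  rw [riemannSum_trans, riemannSum_trans]
  ring

theorem IsFineRiemannDiff.abs_lt {u v : K} {d A ε : ℝ} (h : IsFineRiemannDiff f G δ u v d)
    (hA : ∀ P : TaggedPartition K u v, P.IsFine δ → |riemannSum f G P - A| < ε) :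
    |d| < 2 * ε := by
  obtain ⟨P, Q, hP, hQ, rfl⟩ := h
  have hPA := abs_sub_lt_iff.mp (hA P hP)
  have hQA := abs_sub_lt_iff.mp (hA Q hQ)
  rw [abs_sub_lt_iff]
  constructor <;> linarith

/-- The gaps between the intervals are filled with the same `δ`-fine partition on both sides. -/
theorem IsGauge.isFineRiemannDiff_sum [TopologicalSpace K] [OrderTopology K] [CompactSpace K]
    [BoundedOrder K] (hδ : IsGauge K ⊥ ⊤ δ) {m : ℕ} {a b : ℕ → K} {d : ℕ → ℝ}
    (hord : ∀ k, k + 1 < m → b k ≤ a (k + 1))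
    (hd : ∀ k < m, IsFineRiemannDiff f G δ (a k) (b k) (d k)) :
    IsFineRiemannDiff f G δ ⊥ ⊤ (∑ k ∈ Finset.range m, d k) := by
  have hgap : ∀ u v : K, u ≤ v → IsFineRiemannDiff f G δ u v 0 := fun u v huv => by
    obtain ⟨P, hP⟩ := hδ.exists_isFine_of_le bot_le le_top huv
    exact isFineRiemannDiff_zero hP
  have hprefix : ∀ j ≤ m, ∃ c, (j < m → c ≤ a j) ∧
      IsFineRiemannDiff f G δ ⊥ c (∑ k ∈ Finset.range j, d k) := by
    intro j
    induction j with
    | zero => exact fun _ => ⟨⊥, fun _ => bot_le, isFineRiemannDiff_zero (refl_isFine ⊥ δ)⟩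
    | succ j ih =>
      intro hj
      obtain ⟨c, hca, hc⟩ := ih (by omega)
      refine ⟨b j, hord j, ?_⟩
      simpa [Finset.sum_range_succ] using
        (hc.trans (hgap c (a j) (hca (by omega)))).trans (hd j (by omega))
  obtain ⟨c, -, hc⟩ := hprefix m le_rfl
  simpa using hc.trans (hgap c ⊤ le_top)

theorem HasIntegral.exists_isFineRiemannDiff_single [TopologicalSpace K] [OrderTopology K]
    [CompactSpace K] {a b u v tg : K} {I η : ℝ} (hI : HasIntegral f G u v I)
    (hδ : IsGauge K a b δ) (hau : a ≤ u) (hvb : v ≤ b) (hut : u ≤ tg) (htv : tg ≤ v)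
    (hfine : Ioc u v ⊆ δ tg) (hη : 0 < η) :
    ∃ e, |e| < η ∧ IsFineRiemannDiff f G δ u v (f tg * (G v - G u) + f u * G u - I - e) := by
  obtain ⟨Q, hQ, hQI⟩ := hI.exists_isFine_abs_sub_lt hδ hau hvb (hut.trans htv) hη
  refine ⟨riemannSum f G Q - I, hQI, single u v tg hut htv, Q, single_isFine hfine, hQ, ?_⟩
  rw [riemannSum_single]
  ring

end RiemannDiff

theorem abs_sum_range_le_of_forall_abs_lt {m : ℕ} {e : ℕ → ℝ} {η : ℝ}
    (he : ∀ k, |e k| < η / (m + 1)) : |∑ k ∈ Finset.range m, e k| ≤ η := by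
  have hη : 0 ≤ η :=
    ((div_pos_iff_of_pos_right (by positivity)).mp ((abs_nonneg _).trans_lt (he 0))).le
  calc |∑ k ∈ Finset.range m, e k| ≤ ∑ k ∈ Finset.range m, |e k| :=
        Finset.abs_sum_le_sum_abs _ _
    _ ≤ m * (η / (m + 1)) := by
        simpa using Finset.sum_le_sum fun k (_ : k ∈ Finset.range m) => (he k).le
    _ ≤ η := by
        rw [mul_div_assoc', div_le_iff₀ (by positivity)]
        nlinarith

theorem saks_henstock_general {K : Type*} [LinearOrder K] [TopologicalSpace K] [OrderTopology K]
    [CompactSpace K] [BoundedOrder K] (f G : K → ℝ)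
    (A : ℝ) (ε : ℝ)
    (δ : K → Set K) (hδ : IsGauge K ⊥ ⊤ δ)
    (hδε : ∀ P : TaggedPartition K (⊥ : K) (⊤ : K), P.IsFine δ → |riemannSum f G P - A| < ε)
    (m : ℕ) (a b t : ℕ → K)
    (hmem : ∀ k < m, a k ≤ t k ∧ t k ≤ b k)
    (hord : ∀ k, k + 1 < m → b k ≤ a (k + 1))
    (hfine : ∀ k < m, Set.Ioc (a k) (b k) ⊆ δ (t k))
    (ι : ℕ → ℝ) (hι : ∀ k < m, HasIntegral f G (a k) (b k) (ι k)) :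
    |∑ k ∈ Finset.range m, (f (t k) * (G (b k) - G (a k)) + f (a k) * G (a k) - ι k)|
      ≤ 2 * ε := by
  refine le_of_forall_pos_le_add fun η hη => ?_
  have hlocal : ∀ k, ∃ e : ℝ, |e| < η / (m + 1) ∧
      (k < m → IsFineRiemannDiff f G δ (a k) (b k)
        (f (t k) * (G (b k) - G (a k)) + f (a k) * G (a k) - ι k - e)) := by
    intro k
    by_cases hk : k < m
    · obtain ⟨e, he, hd⟩ := (hι k hk).exists_isFineRiemannDiff_single hδ bot_le le_top
        (hmem k hk).1 (hmem k hk).2 (hfine k hk) (η := η / (m + 1)) (by positivity)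
      exact ⟨e, he, fun _ => hd⟩
    · exact ⟨0, by simpa using by positivity, fun h => absurd h hk⟩
  choose e he hde using hlocal
  have hmain := (hδ.isFineRiemannDiff_sum hord hde).abs_lt hδε
  have herr := abs_sum_range_le_of_forall_abs_lt he
  calc _ = |∑ k ∈ Finset.range m,
          (f (t k) * (G (b k) - G (a k)) + f (a k) * G (a k) - ι k - e k)
        + ∑ k ∈ Finset.range m, e k| := by rw [← Finset.sum_add_distrib]; simp
    _ ≤ _ := abs_add_le _ _
    _ ≤ 2 * ε + η := by linarith

theorem saks_henstock {K : Type*} [LinearOrder K] [TopologicalSpace K] [OrderTopology K]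
    [CompactSpace K] [BoundedOrder K] (f G : K → ℝ) (hG : Amenable G)
    (A : ℝ) (hf : HasIntegral f G (⊥ : K) ⊤ A) (ε : ℝ) (hε : 0 < ε)
    (δ : K → Set K) (hδ : IsGauge K ⊥ ⊤ δ)
    (hδε : ∀ P : TaggedPartition K (⊥ : K) (⊤ : K), P.IsFine δ → |riemannSum f G P - A| < ε)
    (m : ℕ) (a b t : ℕ → K)
    (hmem : ∀ k < m, a k ≤ t k ∧ t k ≤ b k)
    (hord : ∀ k, k + 1 < m → b k ≤ a (k + 1))
    (hfine : ∀ k < m, Set.Ioc (a k) (b k) ⊆ δ (t k))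
    (ι : ℕ → ℝ) (hι : ∀ k < m, HasIntegral f G (a k) (b k) (ι k)) :
    |∑ k ∈ Finset.range m, (f (t k) * (G (b k) - G (a k)) + f (a k) * G (a k) - ι k)|
      ≤ 2 * ε :=
  saks_henstock_general f G A ε δ hδ hδε m a b t hmem hord hfine ι hι
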